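/- For every odd natural number n, the Pell numbers satisfy P_{7n} = 512·P_n^7 − 448·P_n^5 + 112·P_n^3 − 7·P_n. -/
import Mathlib


def pell : ℕ → ℤ
  | 0 => 0
  | 1 => 1
  | n + 2 => 2 * pell (n + 1) + pell n

theorem pell_add (m k : ℕ) :
    pell (m + k + 1) = pell (m + 1) * pell (k + 1) + pell m * pell k := by
  induction m using Nat.twoStepInduction generalizing k with
  | zero => simp [pell]
  | one =>
    rw [show 1 + k + 1 = k + 2 from by omega]
    show pell (k + 2) = pell 2 * pell (k + 1) + pell 1 * pell k
    simp [pell]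
  | more m ih1 ih2 =>
    have e1 : m + 2 + k + 1 = (m + k + 1) + 2 := by omega
    have e2 : (m + k + 1) + 1 = (m + 1) + k + 1 := by omega
    rw [e1, show pell ((m+k+1)+2) = 2 * pell ((m+k+1)+1) + pell (m+k+1) from rfl,
        e2, ih2 k, ih1 k,
        show pell (m+2+1) = 2 * pell (m+2) + pell (m+1) from rfl,
        show pell (m+2) = 2 * pell (m+1) + pell m from rfl]
    ring

theorem pell_cassini (k : ℕ) :
    pell (k + 2) * pell k - pell (k + 1) ^ 2 = (-1 : ℤ) ^ (k + 1) := by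
  induction k with
  | zero => simp [pell]
  | succ k ih =>
    rw [show pell (k+1+2) = 2 * pell (k+2) + pell (k+1) from rfl] at *
    have h2 : pell (k + 2) = 2 * pell (k + 1) + pell k := rfl
    rw [h2]
    rw [h2] at ih
    have : ((-1:ℤ)) ^ (k + 1 + 1) = (-1) * (-1) ^ (k+1) := by ring
    rw [this]
    linear_combination (-1 : ℤ) * ih

theorem pell_key (N : ℕ) (a c d : ℤ) (hA : pell N = a) (hB : pell (N + 1) = c)
    (hg2 : d = c - 2 * a) (hrel : c * d - a ^ 2 = -1)
    (hAgen : ∀ k, pell (k + N) = pell (k + 1) * a + pell k * d)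
    (hBgen : ∀ k, pell (k + N + 1) = pell (k + 1) * c + pell k * a) :
    pell (7 * N) = 512 * a ^ 7 - 448 * a ^ 5 + 112 * a ^ 3 - 7 * a := by
  have A2 : pell (2 * N) = (1) * a^1 * d^1 + (1) * a^1 * c^1 := by
    rw [show 2 * N = 1 * N + N from by ring, hAgen (1 * N)]
    rw [show 1 * N + 1 = N + 1 from by ring, show 1 * N = N from by ring, hA, hB]
    ring
  have B2 : pell (2 * N + 1) = (1) * c^2 + (1) * a^2 := by
    rw [show 2 * N + 1 = 1 * N + N + 1 from by ring, hBgen (1 * N)]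
    rw [show 1 * N + 1 = N + 1 from by ring, show 1 * N = N from by ring, hA, hB]
    ring
  have A3 : pell (3 * N) = (1) * a^1 * d^2 + (1) * a^1 * c^1 * d^1 + (1) * a^1 * c^2 + (1) * a^3 := by
    rw [show 3 * N = 2 * N + N from by ring, hAgen (2 * N), A2, B2]
    ring
  have B3 : pell (3 * N + 1) = (1) * c^3 + (1) * a^2 * d^1 + (2) * a^2 * c^1 := by
    rw [show 3 * N + 1 = 2 * N + N + 1 from by ring, hBgen (2 * N), A2, B2]
    ring
  have A4 : pell (4 * N) = (1) * a^1 * d^3 + (1) * a^1 * c^1 * d^2 + (1) * a^1 * c^2 * d^1 + (1) * a^1 * c^3 + (2) * a^3 * d^1 + (2) * a^3 * c^1 := by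
    rw [show 4 * N = 3 * N + N from by ring, hAgen (3 * N), A3, B3]
    ring
  have B4 : pell (4 * N + 1) = (1) * c^4 + (1) * a^2 * d^2 + (2) * a^2 * c^1 * d^1 + (3) * a^2 * c^2 + (1) * a^4 := by
    rw [show 4 * N + 1 = 3 * N + N + 1 from by ring, hBgen (3 * N), A3, B3]
    ring
  have A5 : pell (5 * N) = (1) * a^1 * d^4 + (1) * a^1 * c^1 * d^3 + (1) * a^1 * c^2 * d^2 + (1) * a^1 * c^3 * d^1 + (1) * a^1 * c^4 + (3) * a^3 * d^2 + (4) * a^3 * c^1 * d^1 + (3) * a^3 * c^2 + (1) * a^5 := by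
    rw [show 5 * N = 4 * N + N from by ring, hAgen (4 * N), A4, B4]
    ring
  have B5 : pell (5 * N + 1) = (1) * c^5 + (1) * a^2 * d^3 + (2) * a^2 * c^1 * d^2 + (3) * a^2 * c^2 * d^1 + (4) * a^2 * c^3 + (2) * a^4 * d^1 + (3) * a^4 * c^1 := by
    rw [show 5 * N + 1 = 4 * N + N + 1 from by ring, hBgen (4 * N), A4, B4]
    ring
  have A6 : pell (6 * N) = (1) * a^1 * d^5 + (1) * a^1 * c^1 * d^4 + (1) * a^1 * c^2 * d^3 + (1) * a^1 * c^3 * d^2 + (1) * a^1 * c^4 * d^1 + (1) * a^1 * c^5 + (4) * a^3 * d^3 + (6) * a^3 * c^1 * d^2 + (6) * a^3 * c^2 * d^1 + (4) * a^3 * c^3 + (3) * a^5 * d^1 + (3) * a^5 * c^1 := by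
    rw [show 6 * N = 5 * N + N from by ring, hAgen (5 * N), A5, B5]
    ring
  have B6 : pell (6 * N + 1) = (1) * c^6 + (1) * a^2 * d^4 + (2) * a^2 * c^1 * d^3 + (3) * a^2 * c^2 * d^2 + (4) * a^2 * c^3 * d^1 + (5) * a^2 * c^4 + (3) * a^4 * d^2 + (6) * a^4 * c^1 * d^1 + (6) * a^4 * c^2 + (1) * a^6 := by
    rw [show 6 * N + 1 = 5 * N + N + 1 from by ring, hBgen (5 * N), A5, B5]
    ring
  have A7 : pell (7 * N) = (1) * a^1 * d^6 + (1) * a^1 * c^1 * d^5 + (1) * a^1 * c^2 * d^4 + (1) * a^1 * c^3 * d^3 + (1) * a^1 * c^4 * d^2 + (1) * a^1 * c^5 * d^1 + (1) * a^1 * c^6 + (5) * a^3 * d^4 + (8) * a^3 * c^1 * d^3 + (9) * a^3 * c^2 * d^2 + (8) * a^3 * c^3 * d^1 + (5) * a^3 * c^4 + (6) * a^5 * d^2 + (9) * a^5 * c^1 * d^1 + (6) * a^5 * c^2 + (1) * a^7 := by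
    rw [show 7 * N = 6 * N + N from by ring, hAgen (6 * N), A6, B6]
    ring
  rw [A7]
  linear_combination ((7) * a^1 + (-7) * a^1 * c^2 + (7) * a^1 * c^4 + (14) * a^2 * c^1 + (-28) * a^2 * c^3 + (-105) * a^3 + (126) * a^3 * c^2 + (-196) * a^4 * c^1 + (343) * a^5) * hrel + ((1) * a^1 * d^5 + (-7) * a^1 * c^1 + (2) * a^1 * c^1 * d^4 + (3) * a^1 * c^2 * d^3 + (7) * a^1 * c^3 + (4) * a^1 * c^3 * d^2 + (5) * a^1 * c^4 * d^1 + (-1) * a^1 * c^5 + (-2) * a^2 * d^4 + (-6) * a^2 * c^1 * d^3 + (-14) * a^2 * c^2 + (-12) * a^2 * c^2 * d^2 + (-20) * a^2 * c^3 * d^1 + (-2) * a^2 * c^4 + (9) * a^3 * d^3 + (105) * a^3 * c^1 + (29) * a^3 * c^1 * d^2 + (62) * a^3 * c^2 * d^1 + (-16) * a^3 * c^3 + (-18) * a^4 * d^2 + (-76) * a^4 * c^1 * d^1 + (-4) * a^4 * c^2 + (42) * a^5 * d^1 + (-140) * a^5 * c^1 + (-84) * a^6) * hg2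

theorem pell_seven_mul (n : ℕ) (hn : Odd n) :
    pell (7 * n) = 512 * pell n ^ 7 - 448 * pell n ^ 5 + 112 * pell n ^ 3 - 7 * pell n := by
  obtain ⟨t, rfl⟩ := hn
  set N := 2 * t + 1 with hN
  have hc : pell (N + 1) = 2 * pell N + pell (2 * t) := by
    rw [hN, show 2 * t + 1 + 1 = 2 * t + 2 from rfl]
    rfl
  have hrel : pell (N + 1) * pell (2 * t) - pell N ^ 2 = -1 := by
    have h := pell_cassini (2 * t)
    have hodd : ((-1 : ℤ)) ^ (2 * t + 1) = -1 := Odd.neg_one_pow ⟨t, by ring⟩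
    rw [hodd] at h
    rw [hN, show 2 * t + 1 + 1 = 2 * t + 2 from rfl]
    linarith [h]
  refine pell_key N (pell N) (pell (N + 1)) (pell (2 * t)) rfl rfl (by linarith [hc]) hrel ?_ ?_
  · intro k
    have := pell_add k (2 * t)
    rw [show k + 2 * t + 1 = k + N from by omega] at this
    rw [this, hN]
  · intro k
    exact pell_add k N
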